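/- arXiv:1206.6717 — 5 statements merged into one kernel-verified Lean document; each statement's English description precedes it below -/
import Mathlib

section
/- Let E and F be normed spaces over a valued field K, let h : E → F be a bounded Lipschitz map, and let v : E → E be Hölder of exponent α ∈ (0,1]. Then h ∘ (id_E + v) : E → F is Hölder of exponent α, with Lip_α(h ∘ (id_E + v)) ≤ max{Lip(h)·(1 + Lip_α(v)), spread(h)}. -/
open NNReal

/-- If `h : E → F` is a bounded Lipschitz map and `v : E → E` is Hölder of
exponent `α ∈ (0,1]`, then `h ∘ (id + v)` is Hölder of exponent `α`, with
constant at most `max (Lip h * (1 + Lip_α v)) (spread h)`. -/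
theorem holder_comp_add_of_lipschitz
    {K E F : Type*} [NontriviallyNormedField K]
    [NormedAddCommGroup E] [NormedSpace K E]
    [NormedAddCommGroup F] [NormedSpace K F]
    (h : E → F) (v : E → E) (α Ch Cv S : ℝ≥0)
    (hα : 0 < α) (hα1 : α ≤ 1)
    (hhL : LipschitzWith Ch h)
    (hhB : ∃ M : ℝ, ∀ x, ‖h x‖ ≤ M)
    (hS : ∀ x y, dist (h x) (h y) ≤ S)
    (hv : HolderWith Cv α v) :
    HolderWith (max (Ch * (1 + Cv)) S) α (fun x => h (x + v x)) := by
  intro x y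
  rcases le_or_gt (edist x y) 1 with hle | hgt
  · calc edist (h (x + v x)) (h (y + v y))
        ≤ Ch * edist (x + v x) (y + v y) := hhL.edist_le_mul _ _
      _ ≤ Ch * (edist x y + edist (v x) (v y)) := by
          gcongr
          exact edist_add_add_le _ _ _ _
      _ ≤ Ch * (edist x y ^ (α : ℝ) + Cv * edist x y ^ (α : ℝ)) := by
          gcongr
          · calc edist x y = edist x y ^ (1 : ℝ) := (ENNReal.rpow_one _).symm
              _ ≤ edist x y ^ (α : ℝ) :=
                ENNReal.rpow_le_rpow_of_exponent_ge (by exact_mod_cast hle)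
                  (by exact_mod_cast hα1)
          · exact hv x y
      _ = (Ch * (1 + Cv) : ℝ≥0) * edist x y ^ (α : ℝ) := by
          push_cast
          ring
      _ ≤ (max (Ch * (1 + Cv)) S : ℝ≥0) * edist x y ^ (α : ℝ) := by
          gcongr
          exact_mod_cast le_max_left _ _
  · calc edist (h (x + v x)) (h (y + v y))
        ≤ (S : ENNReal) := by
          rw [edist_dist]
          exact ENNReal.ofReal_le_of_le_toReal (by simpa using hS _ _)
      _ = (S : ENNReal) * 1 := (mul_one _).symm
      _ ≤ (max (Ch * (1 + Cv)) S : ℝ≥0) * edist x y ^ (α : ℝ) := by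
          gcongr
          · exact_mod_cast le_max_right _ _
          · calc (1 : ENNReal) = 1 ^ (α : ℝ) := (ENNReal.one_rpow _).symm
              _ ≤ edist x y ^ (α : ℝ) :=
                ENNReal.rpow_le_rpow hgt.le (by positivity)
end

section
/- Let E ≠ {0} be a Banach space over a valued field, A : E → E an invertible continuous linear map with continuous inverse, and 0 < λ < 1. Let Ω be the set of bounded Lipschitz maps v : E → E with Lip(v)·‖A⁻¹‖ ≤ λ, equipped with the supremum metric d_∞(v₁, v₂) = ‖v₁ − v₂‖_∞. For v ∈ Ω set w_v := (A + v)⁻¹ − A⁻¹. Then the map φ : Ω → BC(E, E), v ↦ w_v, is Lipschitz with Lip(φ) ≤ ‖A⁻¹‖/(1 − λ). -/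
open NNReal

/-- Lipschitz dependence of `w_v = (A+v)⁻¹ - A⁻¹` on the bounded Lipschitz
perturbation `v` (with `Lip v * ‖A⁻¹‖ ≤ lam < 1`), in the supremum metric:
`‖w_{v₁} - w_{v₂}‖_∞ ≤ ‖A⁻¹‖ / (1 - lam) * ‖v₁ - v₂‖_∞`. -/
theorem lipschitz_dependence_of_inverse
    {K E : Type*} [NontriviallyNormedField K]
    [NormedAddCommGroup E] [NormedSpace K E] [CompleteSpace E] [Nontrivial E]
    (A : E ≃L[K] E) (lam : ℝ≥0) (hlam : (lam : ℝ) < 1)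
    (v₁ v₂ : E → E) (L₁ L₂ : ℝ≥0)
    (hv₁L : LipschitzWith L₁ v₁) (hv₂L : LipschitzWith L₂ v₂)
    (hv₁B : ∃ M : ℝ, ∀ x, ‖v₁ x‖ ≤ M) (hv₂B : ∃ M : ℝ, ∀ x, ‖v₂ x‖ ≤ M)
    (hL₁ : (L₁ : ℝ) * ‖(A.symm : E →L[K] E)‖ ≤ lam)
    (hL₂ : (L₂ : ℝ) * ‖(A.symm : E →L[K] E)‖ ≤ lam)
    (g₁ g₂ : E → E)
    (hg₁l : Function.LeftInverse g₁ (fun x => A x + v₁ x))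
    (hg₁r : Function.RightInverse g₁ (fun x => A x + v₁ x))
    (hg₂l : Function.LeftInverse g₂ (fun x => A x + v₂ x))
    (hg₂r : Function.RightInverse g₂ (fun x => A x + v₂ x))
    (D : ℝ) (hD : ∀ x, ‖v₁ x - v₂ x‖ ≤ D) :
    ∀ x, ‖(g₁ x - A.symm x) - (g₂ x - A.symm x)‖ ≤
      ‖(A.symm : E →L[K] E)‖ / (1 - lam) * D := by
  intro x
  set c := ‖(A.symm : E →L[K] E)‖ with hc
  have hc0 : 0 ≤ c := norm_nonneg _
  have hD0 : 0 ≤ D := le_trans (norm_nonneg _) (hD x)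
  have h1 : A (g₁ x) + v₁ (g₁ x) = x := hg₁r x
  have h2 : A (g₂ x) + v₂ (g₂ x) = x := hg₂r x
  have hkey : g₁ x - g₂ x = A.symm (v₂ (g₂ x) - v₁ (g₁ x)) := by
    apply A.injective
    rw [map_sub, A.apply_symm_apply]
    have e1 : A (g₁ x) = x - v₁ (g₁ x) := eq_sub_of_add_eq h1
    have e2 : A (g₂ x) = x - v₂ (g₂ x) := eq_sub_of_add_eq h2
    rw [e1, e2]; abel
  have hbound : ‖g₁ x - g₂ x‖ ≤ c * D + (lam : ℝ) * ‖g₁ x - g₂ x‖ := by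
    calc ‖g₁ x - g₂ x‖ = ‖A.symm (v₂ (g₂ x) - v₁ (g₁ x))‖ := by rw [hkey]
      _ ≤ c * ‖v₂ (g₂ x) - v₁ (g₁ x)‖ :=
          (A.symm : E →L[K] E).le_opNorm _
      _ ≤ c * (‖v₂ (g₂ x) - v₁ (g₂ x)‖ + ‖v₁ (g₂ x) - v₁ (g₁ x)‖) := by
          apply mul_le_mul_of_nonneg_left _ hc0
          have : v₂ (g₂ x) - v₁ (g₁ x)
              = (v₂ (g₂ x) - v₁ (g₂ x)) + (v₁ (g₂ x) - v₁ (g₁ x)) := by abel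
          rw [this]; exact norm_add_le _ _
      _ ≤ c * (D + (L₁ : ℝ) * ‖g₁ x - g₂ x‖) := by
          apply mul_le_mul_of_nonneg_left _ hc0
          apply add_le_add
          · rw [← norm_neg]; simpa using hD (g₂ x)
          · have := hv₁L.dist_le_mul (g₂ x) (g₁ x)
            rw [dist_eq_norm, dist_eq_norm, norm_sub_rev (g₂ x)] at this
            exact this
      _ = c * D + ((L₁ : ℝ) * c) * ‖g₁ x - g₂ x‖ := by ring
      _ ≤ c * D + (lam : ℝ) * ‖g₁ x - g₂ x‖ := by
          have := mul_le_mul_of_nonneg_right hL₁ (norm_nonneg (g₁ x - g₂ x))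
          linarith
  have hfin : ‖g₁ x - g₂ x‖ ≤ c / (1 - (lam : ℝ)) * D := by
    rw [div_mul_eq_mul_div, le_div_iff₀ (by linarith)]
    nlinarith [norm_nonneg (g₁ x - g₂ x)]
  have : (g₁ x - A.symm x) - (g₂ x - A.symm x) = g₁ x - g₂ x := by abel
  rw [this]
  exact hfin
end

section
/- Let (E, ‖·‖) be an ultrametric Banach space over a valued field K (E ≠ {0}) and A : E → E an invertible continuous linear map whose operator norm with respect to some equivalent norm ‖·‖' satisfies ‖A‖' < 1. Then there exists an ultrametric norm ‖·‖~ on E, equivalent to ‖·‖, such that the operator norm of A with respect to ‖·‖~ is strictly less than 1. Concretely, if C ≥ 1 satisfies C⁻¹‖·‖' ≤ ‖·‖ ≤ C‖·‖', θ := ‖A‖', and n ≥ 2 is chosen so that C²θ^{n−1} < 1, then ‖x‖~ := max{θ^{−k/(n−1)}‖A^k x‖ : k = 0, …, n−1} works, and ‖A‖~ ≤ max{θ^{1/(n−1)}, C²θ^{n−1}} < 1. -/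
/-!
For `‖x‖~ = max_{k < n} θ^{-k/(n-1)} ‖A^k x‖`, each term of `‖A x‖~` with `k + 1 < n` is
`θ^{1/(n-1)}` times the `(k+1)`-st term of `‖x‖~`; only the last term `θ⁻¹ ‖A^n x‖` is not
shifted down the list. It is controlled through the auxiliary norm: iterating
`N' (A x) ≤ θ N' x` and comparing `N'` with `‖·‖` twice gives `‖A^n x‖ ≤ C² θ^n ‖x‖`, hence
`θ⁻¹ ‖A^n x‖ ≤ C² θ^{n-1} ‖x‖~`. The same comparison bounds every term of `‖x‖~` by
`C² θ⁻¹ ‖x‖`, and the ultrametric inequality holds term by term.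
-/

open Finset

lemma iterate_le_pow_mul {α : Type*} {f : α → α} {N : α → ℝ} {θ : ℝ} (hθ : 0 ≤ θ)
    (hf : ∀ x, N (f x) ≤ θ * N x) (k : ℕ) (x : α) : N (f^[k] x) ≤ θ ^ k * N x := by
  induction k generalizing x with
  | zero => simp
  | succ k ih =>
    calc N (f^[k + 1] x) = N (f^[k] (f x)) := by rw [Function.iterate_succ_apply]
      _ ≤ θ ^ k * (θ * N x) := (ih (f x)).trans (by gcongr; exact hf x)
      _ = θ ^ (k + 1) * N x := by ring

lemma norm_iterate_le_of_equiv {E : Type*} [Norm E] {f : E → E} {N' : E → ℝ} {C θ : ℝ}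
    (hC : 0 < C) (hθ : 0 ≤ θ) (hlow : ∀ x, C⁻¹ * N' x ≤ ‖x‖) (hup : ∀ x, ‖x‖ ≤ C * N' x)
    (hf : ∀ x, N' (f x) ≤ θ * N' x) (k : ℕ) (x : E) :
    ‖f^[k] x‖ ≤ C ^ 2 * θ ^ k * ‖x‖ := by
  have hN' : N' x ≤ C * ‖x‖ := by
    rw [← inv_mul_le_iff₀ hC]
    exact hlow x
  calc ‖f^[k] x‖ ≤ C * (θ ^ k * N' x) :=
        (hup _).trans (by gcongr; exact iterate_le_pow_mul hθ hf k x)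
    _ ≤ C * (θ ^ k * (C * ‖x‖)) := by gcongr
    _ = C ^ 2 * θ ^ k * ‖x‖ := by ring

lemma Finset.sup'_mul_norm_map_add_le_max {ι K E F : Type*} [NontriviallyNormedField K]
    [NormedAddCommGroup E] [NormedSpace K E] [NormedAddCommGroup F] [NormedSpace K F]
    [IsUltrametricDist F] (s : Finset ι) (hs : s.Nonempty) {w : ι → ℝ} (hw : ∀ i, 0 ≤ w i)
    (L : ι → E →L[K] F) (x y : E) :
    s.sup' hs (fun i => w i * ‖L i (x + y)‖) ≤
      max (s.sup' hs fun i => w i * ‖L i x‖) (s.sup' hs fun i => w i * ‖L i y‖) := by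
  refine s.sup'_le hs _ fun i hi => ?_
  calc w i * ‖L i (x + y)‖ ≤ w i * max ‖L i x‖ ‖L i y‖ := by
        rw [map_add]
        exact mul_le_mul_of_nonneg_left (IsUltrametricDist.norm_add_le_max _ _) (hw i)
    _ = max (w i * ‖L i x‖) (w i * ‖L i y‖) := mul_max_of_nonneg _ _ (hw i)
    _ ≤ _ := max_le_max (s.le_sup' (fun i => w i * ‖L i x‖) hi)
        (s.le_sup' (fun i => w i * ‖L i y‖) hi)

namespace Real

lemma rpow_neg_div_le_inv {θ k m : ℝ} (hθ0 : 0 < θ) (hθ1 : θ ≤ 1) (hk : k ≤ m) (hm : 0 ≤ m) :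
    θ ^ (-k / m) ≤ θ⁻¹ := by
  rw [← rpow_neg_one]
  refine rpow_le_rpow_of_exponent_ge hθ0 hθ1 ?_
  rw [neg_div, neg_le_neg_iff]
  exact div_le_one_of_le₀ hk hm

lemma rpow_neg_div_eq_mul_rpow_neg_succ_div {θ : ℝ} (hθ : 0 < θ) (k m : ℝ) :
    θ ^ (-k / m) = θ ^ (1 / m) * θ ^ (-(k + 1) / m) := by
  rw [← rpow_add hθ]
  ring_nf

end Real

section AdaptedNorm

variable {K E : Type*} [NontriviallyNormedField K] [NormedAddCommGroup E] [NormedSpace K E]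

noncomputable def adaptedNorm (A : E →L[K] E) (θ : ℝ) (n : ℕ) (hn : (range n).Nonempty)
    (x : E) : ℝ :=
  (range n).sup' hn fun k => θ ^ (-(k : ℝ) / ((n : ℝ) - 1)) * ‖(A ^ k) x‖

variable (A : E →L[K] E) {θ : ℝ} {n : ℕ} (hn : (range n).Nonempty)

lemma le_adaptedNorm {k : ℕ} (hk : k < n) (x : E) :
    θ ^ (-(k : ℝ) / ((n : ℝ) - 1)) * ‖(A ^ k) x‖ ≤ adaptedNorm A θ n hn x :=
  (range n).le_sup' (fun k => θ ^ (-(k : ℝ) / ((n : ℝ) - 1)) * ‖(A ^ k) x‖) (mem_range.2 hk)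

lemma norm_le_adaptedNorm (x : E) : ‖x‖ ≤ adaptedNorm A θ n hn x := by
  simpa using le_adaptedNorm A hn (nonempty_range_iff.1 hn |> Nat.pos_of_ne_zero) x

lemma adaptedNorm_add_le_max [IsUltrametricDist E] (hθ : 0 ≤ θ) (x y : E) :
    adaptedNorm A θ n hn (x + y) ≤ max (adaptedNorm A θ n hn x) (adaptedNorm A θ n hn y) :=
  (range n).sup'_mul_norm_map_add_le_max hn (fun _ => Real.rpow_nonneg hθ _) (A ^ ·) x y

variable {A} {C : ℝ} {N' : E → ℝ}

lemma norm_pow_apply_le (hC : 0 < C) (hθ0 : 0 < θ) (hlow : ∀ x, C⁻¹ * N' x ≤ ‖x‖)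
    (hup : ∀ x, ‖x‖ ≤ C * N' x) (hA : ∀ x, N' (A x) ≤ θ * N' x) (k : ℕ) (x : E) :
    ‖(A ^ k) x‖ ≤ C ^ 2 * θ ^ k * ‖x‖ := by
  rw [FunLike.coe_pow_eq_iterate]
  exact norm_iterate_le_of_equiv hC hθ0.le hlow hup hA k x

lemma adaptedNorm_le (hC : 0 < C) (hθ0 : 0 < θ) (hθ1 : θ ≤ 1) (hlow : ∀ x, C⁻¹ * N' x ≤ ‖x‖)
    (hup : ∀ x, ‖x‖ ≤ C * N' x) (hA : ∀ x, N' (A x) ≤ θ * N' x) (x : E) :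
    adaptedNorm A θ n hn x ≤ C ^ 2 * θ⁻¹ * ‖x‖ := by
  refine (range n).sup'_le hn _ fun k hk => ?_
  have hkn : (k : ℝ) + 1 ≤ n := by exact_mod_cast mem_range.1 hk
  calc θ ^ (-(k : ℝ) / ((n : ℝ) - 1)) * ‖(A ^ k) x‖ ≤ θ⁻¹ * (C ^ 2 * θ ^ k * ‖x‖) := by
        gcongr
        · exact Real.rpow_neg_div_le_inv hθ0 hθ1 (by linarith)
            (by linarith [k.cast_nonneg (α := ℝ)])
        · exact norm_pow_apply_le hC hθ0 hlow hup hA k x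
    _ ≤ θ⁻¹ * (C ^ 2 * 1 * ‖x‖) := by gcongr; exact pow_le_one₀ hθ0.le hθ1
    _ = C ^ 2 * θ⁻¹ * ‖x‖ := by ring

lemma adaptedNorm_apply_le (hC : 0 < C) (hθ0 : 0 < θ) (hlow : ∀ x, C⁻¹ * N' x ≤ ‖x‖)
    (hup : ∀ x, ‖x‖ ≤ C * N' x) (hA : ∀ x, N' (A x) ≤ θ * N' x) (hn2 : 2 ≤ n) (x : E) :
    adaptedNorm A θ n hn (A x) ≤
      max (θ ^ ((1 : ℝ) / ((n : ℝ) - 1))) (C ^ 2 * θ ^ (n - 1)) * adaptedNorm A θ n hn x := by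
  have hx : 0 ≤ adaptedNorm A θ n hn x := (norm_nonneg x).trans (norm_le_adaptedNorm A hn x)
  refine (range n).sup'_le hn _ fun k hk => ?_
  rw [← mul_apply_eq_comp, ← pow_succ]
  obtain hkn | hkn := (Nat.succ_le_of_lt (mem_range.1 hk)).lt_or_eq
  · calc θ ^ (-(k : ℝ) / ((n : ℝ) - 1)) * ‖(A ^ (k + 1)) x‖
          = θ ^ ((1 : ℝ) / ((n : ℝ) - 1)) *
            (θ ^ (-((k + 1 : ℕ) : ℝ) / ((n : ℝ) - 1)) * ‖(A ^ (k + 1)) x‖) := by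
          rw [Real.rpow_neg_div_eq_mul_rpow_neg_succ_div hθ0, Nat.cast_succ, mul_assoc]
      _ ≤ θ ^ ((1 : ℝ) / ((n : ℝ) - 1)) * adaptedNorm A θ n hn x := by
          gcongr; exact le_adaptedNorm A hn hkn x
      _ ≤ _ := by gcongr; exact le_max_left _ _
  · obtain rfl : n = k + 1 := hkn.symm
    have hm : (((k + 1 : ℕ) : ℝ) - 1) = k := by push_cast; ring
    have hk0 : (k : ℝ) ≠ 0 := by exact_mod_cast (by omega : k ≠ 0)
    calc θ ^ (-(k : ℝ) / (((k + 1 : ℕ) : ℝ) - 1)) * ‖(A ^ (k + 1)) x‖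
          ≤ θ⁻¹ * (C ^ 2 * θ ^ (k + 1) * ‖x‖) := by
          rw [hm, neg_div, div_self hk0, Real.rpow_neg_one]
          gcongr; exact norm_pow_apply_le hC hθ0 hlow hup hA _ x
      _ = C ^ 2 * θ ^ (k + 1 - 1) * ‖x‖ := by rw [Nat.add_sub_cancel]; field_simp; ring
      _ ≤ max (θ ^ ((1 : ℝ) / (((k + 1 : ℕ) : ℝ) - 1))) (C ^ 2 * θ ^ (k + 1 - 1)) *
            adaptedNorm A θ (k + 1) hn x := by
          gcongr
          · exact le_max_right _ _
          · exact norm_le_adaptedNorm A hn x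

end AdaptedNorm

/-- Existence of an equivalent ultrametric norm making a linear contraction
(with respect to some equivalent norm `N'`) a contraction: the explicit norm
`‖x‖~ = max_{0 ≤ k < n} θ^{-k/(n-1)} ‖A^k x‖` is ultrametric, equivalent to
`‖·‖`, and satisfies `‖A x‖~ ≤ max (θ^{1/(n-1)}) (C² θ^{n-1}) ‖x‖~`, with
`max (θ^{1/(n-1)}) (C² θ^{n-1}) < 1`. -/
theorem ultrametric_adapted_norm_contraction
    {K E : Type*} [NontriviallyNormedField K]
    [NormedAddCommGroup E] [NormedSpace K E]
    [IsUltrametricDist E]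
    (A : E →L[K] E) (C θ : ℝ) (hC : 1 ≤ C) (hθ0 : 0 < θ) (hθ1 : θ < 1)
    (N' : E → ℝ)
    (hlow : ∀ x, C⁻¹ * N' x ≤ ‖x‖) (hup : ∀ x, ‖x‖ ≤ C * N' x)
    (hA : ∀ x, N' (A x) ≤ θ * N' x)
    (n : ℕ) (hn : 2 ≤ n) (hσ : C ^ 2 * θ ^ (n - 1) < 1) :
    ∀ x y : E,
      (Finset.range n).sup' (Finset.nonempty_range_iff.mpr (by omega))
          (fun k => θ ^ (-(k : ℝ) / ((n : ℝ) - 1)) * ‖(A ^ k) (x + y)‖) ≤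
        max
          ((Finset.range n).sup' (Finset.nonempty_range_iff.mpr (by omega))
            (fun k => θ ^ (-(k : ℝ) / ((n : ℝ) - 1)) * ‖(A ^ k) x‖))
          ((Finset.range n).sup' (Finset.nonempty_range_iff.mpr (by omega))
            (fun k => θ ^ (-(k : ℝ) / ((n : ℝ) - 1)) * ‖(A ^ k) y‖)) ∧
      (∃ c₁ c₂ : ℝ, 0 < c₁ ∧ 0 < c₂ ∧ ∀ z : E,
        c₁ * ‖z‖ ≤ (Finset.range n).sup' (Finset.nonempty_range_iff.mpr (by omega))
            (fun k => θ ^ (-(k : ℝ) / ((n : ℝ) - 1)) * ‖(A ^ k) z‖) ∧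
        (Finset.range n).sup' (Finset.nonempty_range_iff.mpr (by omega))
            (fun k => θ ^ (-(k : ℝ) / ((n : ℝ) - 1)) * ‖(A ^ k) z‖) ≤ c₂ * ‖z‖) ∧
      ((Finset.range n).sup' (Finset.nonempty_range_iff.mpr (by omega))
          (fun k => θ ^ (-(k : ℝ) / ((n : ℝ) - 1)) * ‖(A ^ k) (A x)‖) ≤
        max (θ ^ ((1 : ℝ) / ((n : ℝ) - 1))) (C ^ 2 * θ ^ (n - 1)) *
          (Finset.range n).sup' (Finset.nonempty_range_iff.mpr (by omega))
            (fun k => θ ^ (-(k : ℝ) / ((n : ℝ) - 1)) * ‖(A ^ k) x‖)) ∧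
      max (θ ^ ((1 : ℝ) / ((n : ℝ) - 1))) (C ^ 2 * θ ^ (n - 1)) < 1 := by
  intro x y
  have hC0 : 0 < C := by linarith
  have hne : (range n).Nonempty := nonempty_range_iff.2 (by omega)
  have hm : (0 : ℝ) < n - 1 := by
    have : (2 : ℝ) ≤ n := by exact_mod_cast hn
    linarith
  refine ⟨adaptedNorm_add_le_max A hne hθ0.le x y,
    ⟨1, C ^ 2 * θ⁻¹, one_pos, by positivity, fun z => ⟨?_, ?_⟩⟩,
    adaptedNorm_apply_le hne hC0 hθ0 hlow hup hA hn x,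
    max_lt (Real.rpow_lt_one hθ0.le hθ1 (one_div_pos.2 hm)) hσ⟩
  · exact (one_mul ‖z‖).trans_le (norm_le_adaptedNorm A hne z)
  · exact adaptedNorm_le hne hC0 hθ0 hθ1.le hlow hup hA z
end

section
/- Let E = E_s ⊕ E_u be a Banach space over a valued field with a norm satisfying ‖x + y‖ = max{‖x‖, ‖y‖} for x ∈ E_s, y ∈ E_u, and let A : E → E be a linear homeomorphism preserving this splitting, with A₁ := A|_{E_s}, A₂ := A|_{E_u}. Let g = (g_s, g_u) and h = (h_s, h_u) be bounded Lipschitz maps E → E such that Lip(h) < ‖A⁻¹‖⁻¹ and Λ := max{‖A₂⁻¹‖(1 + Lip(g_u)), ‖A₁‖ + Lip(g_s)} < 1. Then there exists a unique bounded continuous map v : E → E such that (id + v) ∘ (A + h) = (A + g) ∘ (id + v), and it satisfies ‖v‖_∞ ≤ max{‖h_s‖_∞ + ‖g_s‖_∞, ‖A₂⁻¹‖(‖h_u‖_∞ + ‖g_u‖_∞)}/(1 − Λ). If moreover g(0) = h(0) = 0, then v(0) = 0. -/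
/-!
Since `h` is a Lipschitz perturbation of `A` with `Lip h < ‖A⁻¹‖⁻¹`, the map `F = A + h` is a
homeomorphism, and the conjugacy equation becomes `v ∘ F = A v + g ∘ (id + v) - h`. Solving its
stable component forward, `v_s = (A₁ v_s + g_s ∘ (id + v) - h_s) ∘ F⁻¹`, and its unstable component
backward, `v_u = A₂⁻¹ (v_u ∘ F + h_u - g_u ∘ (id + v))`, gives an operator `T` on bounded
continuous maps which is `Λ`-Lipschitz for the sup norm. Banach's fixed point theorem yields
existence, uniqueness and `‖v‖ ≤ ‖T 0‖ / (1 - Λ)`. When `g 0 = h 0 = 0`, `T` preserves the closed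
set `{v | v 0 = 0}`, which therefore contains the fixed point.
-/

open NNReal BoundedContinuousFunction

theorem ContractingWith.fixedPoint_mem_of_mapsTo {X : Type*} [MetricSpace X] [CompleteSpace X]
    [Nonempty X] {K : ℝ≥0} {f : X → X} (hf : ContractingWith K f) {s : Set X}
    (hs : IsClosed s) (hfs : Set.MapsTo f s s) (hne : s.Nonempty) : fixedPoint f hf ∈ s := by
  obtain ⟨x, hx⟩ := hne
  exact hs.mem_of_tendsto (hf.tendsto_iterate_fixedPoint x)
    (Filter.Eventually.of_forall fun n => hfs.iterate n hx)

theorem ContinuousLinearEquiv.exists_homeomorph_eq_add_of_lipschitzWith {K E : Type*}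
    [NontriviallyNormedField K] [NormedAddCommGroup E] [NormedSpace K E] [CompleteSpace E]
    (A : E ≃L[K] E) {h : E → E} {L : ℝ≥0} (hh : LipschitzWith L h)
    (hL : (L : ℝ) < ‖(A.symm : E →L[K] E)‖⁻¹) :
    ∃ F : E ≃ₜ E, ∀ x, F x = A x + h x := by
  have hA : ApproximatesLinearOn (fun x => A x + h x) (A : E →L[K] E) Set.univ L := by
    intro x _ y _
    have hxy : A x + h x - (A y + h y) - A (x - y) = h x - h y := by rw [map_sub]; abel
    simpa only [ContinuousLinearEquiv.coe_coe, hxy, ← dist_eq_norm] using hh.dist_le_mul x y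
  refine ⟨hA.toHomeomorph _ (Or.inr ?_), fun _ => rfl⟩
  rw [← NNReal.coe_lt_coe]
  simpa using hL

namespace BoundedContinuousFunction

variable {α β : Type*} [TopologicalSpace α] [NormedAddCommGroup β]
  (Φ : (α → β) → α → β) (hΦc : ∀ v : α →ᵇ β, Continuous (Φ v))
  (hΦb : ∀ v : α →ᵇ β, ∃ C, ∀ x, ‖Φ v x‖ ≤ C)

noncomputable def inducedMap (v : α →ᵇ β) : α →ᵇ β :=
  ofNormedAddCommGroup (Φ v) (hΦc v) _ (hΦb v).choose_spec

variable {Φ hΦc hΦb} {Λ : ℝ≥0}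

theorem contractingWith_inducedMap (hΛ : Λ < 1)
    (hΦ : ∀ v w : α →ᵇ β, ∀ x, dist (Φ v x) (Φ w x) ≤ Λ * dist v w) :
    ContractingWith Λ (inducedMap Φ hΦc hΦb) :=
  ⟨hΛ, LipschitzWith.of_dist_le_mul fun v w =>
    (dist_le (by positivity)).2 fun x => hΦ v w x⟩

variable [CompleteSpace β]

theorem apply_fixedPoint_inducedMap (hT : ContractingWith Λ (inducedMap Φ hΦc hΦb)) :
    Φ (⇑hT.fixedPoint) = ⇑hT.fixedPoint :=
  congrArg DFunLike.coe hT.fixedPoint_isFixedPt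

theorem eq_fixedPoint_inducedMap (hT : ContractingWith Λ (inducedMap Φ hΦc hΦb)) {v : α → β}
    (hvc : Continuous v) {M : ℝ} (hvM : ∀ x, ‖v x‖ ≤ M) (hv : Φ v = v) :
    v = ⇑hT.fixedPoint :=
  congrArg DFunLike.coe <| hT.fixedPoint_unique (x := ofNormedAddCommGroup v hvc M hvM) <|
    DFunLike.coe_injective hv

theorem norm_fixedPoint_inducedMap_le (hT : ContractingWith Λ (inducedMap Φ hΦc hΦb)) {M : ℝ}
    (hM : ∀ x, ‖Φ 0 x‖ ≤ M) (x : α) :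
    ‖⇑hT.fixedPoint x‖ ≤ M / (1 - Λ) := by
  have hM0 : 0 ≤ M := (norm_nonneg _).trans (hM x)
  calc ‖⇑hT.fixedPoint x‖ ≤ dist 0 hT.fixedPoint := by
        rw [dist_comm, dist_zero_right]; exact norm_coe_le_norm _ x
    _ ≤ dist 0 (inducedMap Φ hΦc hΦb 0) / (1 - Λ) := hT.dist_fixedPoint_le 0
    _ ≤ M / (1 - Λ) := by
        rw [dist_comm, dist_zero_right]
        gcongr
        · exact sub_nonneg.2 (by exact_mod_cast hT.1.le)
        · exact (norm_le hM0).2 hM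

theorem fixedPoint_inducedMap_apply_eq_zero (hT : ContractingWith Λ (inducedMap Φ hΦc hΦb))
    {a : α} (hΦa : ∀ v : α →ᵇ β, v a = 0 → Φ v a = 0) :
    ⇑hT.fixedPoint a = 0 :=
  hT.fixedPoint_mem_of_mapsTo (s := {v | v a = 0}) (isClosed_eq (continuous_eval_const a)
    continuous_const) (fun v hv => hΦa v hv) ⟨0, rfl⟩

end BoundedContinuousFunction

section Conjugacy

variable {K Es Eu : Type*} [NontriviallyNormedField K]
  [NormedAddCommGroup Es] [NormedSpace K Es] [NormedAddCommGroup Eu] [NormedSpace K Eu]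
  (A₁ : Es ≃L[K] Es) (A₂ : Eu ≃L[K] Eu) (F : Es × Eu ≃ₜ Es × Eu) (g h : Es × Eu → Es × Eu)

def conjugacyOperator (v : Es × Eu → Es × Eu) (p : Es × Eu) : Es × Eu :=
  (A₁ (v (F.symm p)).1 + (g (F.symm p + v (F.symm p))).1 - (h (F.symm p)).1,
    A₂.symm ((v (F p)).2 + (h p).2 - (g (p + v p)).2))

variable {A₁ A₂ F g h}

theorem conjugacyOperator_eq_self_iff' {v : Es × Eu → Es × Eu} :
    conjugacyOperator A₁ A₂ F g h v = v ↔
      ∀ x, v (F x) = A₁.prodCongr A₂ (v x) + g (x + v x) - h x := by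
  constructor
  · intro hv x
    ext
    · rw [← congrFun hv (F x)]
      simp [conjugacyOperator]
    · have hu := congrArg Prod.snd (congrFun hv x)
      rw [conjugacyOperator, A₂.symm_apply_eq] at hu
      simp only [Prod.snd_sub, Prod.snd_add, ContinuousLinearEquiv.prodCongr_apply, ← hu]
      abel
  · intro hv
    funext p
    ext
    · obtain ⟨x, rfl⟩ := F.surjective p
      simp [conjugacyOperator, hv]
    · simp [conjugacyOperator, hv]

theorem conjugacyOperator_eq_self_iff (hF : ∀ x, F x = A₁.prodCongr A₂ x + h x)
    {v : Es × Eu → Es × Eu} :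
    conjugacyOperator A₁ A₂ F g h v = v ↔ ∀ x, A₁.prodCongr A₂ x + h x + v (A₁.prodCongr A₂ x + h x)
      = A₁.prodCongr A₂ (x + v x) + g (x + v x) := by
  rw [conjugacyOperator_eq_self_iff']
  refine forall_congr' fun x => ?_
  rw [hF, ← sub_eq_zero, ← sub_eq_zero (a := _ + _ + _), map_add]
  congr! 1
  abel

theorem continuous_conjugacyOperator (hg : Continuous g) (hh : Continuous h)
    {v : Es × Eu → Es × Eu} (hv : Continuous v) :
    Continuous (conjugacyOperator A₁ A₂ F g h v) := by
  unfold conjugacyOperator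
  fun_prop

theorem norm_conjugacyOperator_le {Mgs Mgu Mhs Mhu : ℝ}
    (hgsM : ∀ x, ‖(g x).1‖ ≤ Mgs) (hguM : ∀ x, ‖(g x).2‖ ≤ Mgu)
    (hhsM : ∀ x, ‖(h x).1‖ ≤ Mhs) (hhuM : ∀ x, ‖(h x).2‖ ≤ Mhu)
    {v : Es × Eu → Es × Eu} {C : ℝ} (hv : ∀ x, ‖v x‖ ≤ C) (p : Es × Eu) :
    ‖conjugacyOperator A₁ A₂ F g h v p‖ ≤
      max (‖(A₁ : Es →L[K] Es)‖ * C + (Mhs + Mgs))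
        (‖(A₂.symm : Eu →L[K] Eu)‖ * (C + (Mhu + Mgu))) := by
  rw [conjugacyOperator, Prod.norm_mk]
  apply max_le_max
  · set q := F.symm p
    have hA₁ : ‖A₁ (v q).1‖ ≤ ‖(A₁ : Es →L[K] Es)‖ * C :=
      (A₁ : Es →L[K] Es).le_of_opNorm_le_of_le le_rfl ((norm_fst_le _).trans (hv q))
    calc ‖A₁ (v q).1 + (g (q + v q)).1 - (h q).1‖
        ≤ ‖A₁ (v q).1‖ + ‖(g (q + v q)).1‖ + ‖(h q).1‖ := norm_sub_le_of_le (norm_add_le _ _) le_rfl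
      _ ≤ _ := by linarith [hgsM (q + v q), hhsM q]
  · refine (A₂.symm : Eu →L[K] Eu).le_of_opNorm_le_of_le le_rfl ?_
    calc ‖(v (F p)).2 + (h p).2 - (g (p + v p)).2‖
        ≤ ‖(v (F p)).2‖ + ‖(h p).2‖ + ‖(g (p + v p)).2‖ :=
          norm_sub_le_of_le (norm_add_le _ _) le_rfl
      _ ≤ _ := by linarith [(norm_snd_le _).trans (hv (F p)), hhuM p, hguM (p + v p)]

theorem dist_conjugacyOperator_le {Lgs Lgu : ℝ≥0} (hgsL : LipschitzWith Lgs fun x => (g x).1)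
    (hguL : LipschitzWith Lgu fun x => (g x).2) {v w : Es × Eu → Es × Eu} {C : ℝ}
    (hvw : ∀ x, dist (v x) (w x) ≤ C) (p : Es × Eu) :
    dist (conjugacyOperator A₁ A₂ F g h v p) (conjugacyOperator A₁ A₂ F g h w p) ≤
      max (‖(A₂.symm : Eu →L[K] Eu)‖ * (1 + Lgu)) (‖(A₁ : Es →L[K] Es)‖ + Lgs) * C := by
  have hC : 0 ≤ C := dist_nonneg.trans (hvw p)
  have hv₁ : ∀ x, dist (v x).1 (w x).1 ≤ C := fun x =>
    (le_max_left _ _).trans (Prod.dist_eq.symm.trans_le (hvw x))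
  have hv₂ : ∀ x, dist (v x).2 (w x).2 ≤ C := fun x =>
    (le_max_right _ _).trans (Prod.dist_eq.symm.trans_le (hvw x))
  rw [conjugacyOperator, conjugacyOperator, Prod.dist_eq, max_mul_of_nonneg _ _ hC]
  refine max_le ((?_ : _ ≤ _).trans (le_max_right _ _)) ((?_ : _ ≤ _).trans (le_max_left _ _))
  · set q := F.symm p
    calc dist (A₁ (v q).1 + (g (q + v q)).1 - (h q).1) (A₁ (w q).1 + (g (q + w q)).1 - (h q).1)
        = dist (A₁ (v q).1 + (g (q + v q)).1) (A₁ (w q).1 + (g (q + w q)).1) :=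
          dist_sub_right _ _ _
      _ ≤ dist (A₁ (v q).1) (A₁ (w q).1) + dist (g (q + v q)).1 (g (q + w q)).1 :=
          dist_add_add_le _ _ _ _
      _ ≤ ‖(A₁ : Es →L[K] Es)‖ * C + Lgs * C := by
          gcongr
          · exact (A₁ : Es →L[K] Es).dist_le_opNorm _ _ |>.trans (by gcongr; exact hv₁ q)
          · exact (hgsL.dist_le_mul _ _).trans (by rw [dist_add_left]; gcongr; exact hvw q)
      _ = (‖(A₁ : Es →L[K] Es)‖ + Lgs) * C := by ring
  · refine ((A₂.symm : Eu →L[K] Eu).dist_le_opNorm _ _).trans ?_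
    rw [mul_assoc]
    gcongr
    calc dist ((v (F p)).2 + (h p).2 - (g (p + v p)).2) ((w (F p)).2 + (h p).2 - (g (p + w p)).2)
        ≤ dist ((v (F p)).2 + (h p).2) ((w (F p)).2 + (h p).2)
          + dist (g (p + v p)).2 (g (p + w p)).2 := dist_sub_sub_le _ _ _ _
      _ ≤ C + Lgu * C := by
          rw [dist_add_right]
          gcongr
          · exact hv₂ (F p)
          · exact (hguL.dist_le_mul _ _).trans (by rw [dist_add_left]; gcongr; exact hvw p)
      _ = (1 + Lgu) * C := by ring

theorem conjugacyOperator_apply_zero (hF : F 0 = 0) (hg : g 0 = 0) (hh : h 0 = 0)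
    {v : Es × Eu → Es × Eu} (hv : v 0 = 0) : conjugacyOperator A₁ A₂ F g h v 0 = 0 := by
  have hF' : F.symm 0 = 0 := F.symm_apply_eq.2 hF.symm
  simp [conjugacyOperator, hF, hF', hg, hh, hv]

end Conjugacy

theorem conjugacy_between_perturbations_general
    {K Es Eu : Type*} [NontriviallyNormedField K]
    [NormedAddCommGroup Es] [NormedSpace K Es] [CompleteSpace Es]
    [NormedAddCommGroup Eu] [NormedSpace K Eu] [CompleteSpace Eu]
    (A₁ : Es ≃L[K] Es) (A₂ : Eu ≃L[K] Eu)
    (g h : Es × Eu → Es × Eu)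
    (Lh Lgs Lgu : ℝ≥0) (Mgs Mgu Mhs Mhu : ℝ)
    (hhL : LipschitzWith Lh h)
    (hgsL : LipschitzWith Lgs (fun x => (g x).1))
    (hguL : LipschitzWith Lgu (fun x => (g x).2))
    (hgsM : ∀ x, ‖(g x).1‖ ≤ Mgs) (hguM : ∀ x, ‖(g x).2‖ ≤ Mgu)
    (hhsM : ∀ x, ‖(h x).1‖ ≤ Mhs) (hhuM : ∀ x, ‖(h x).2‖ ≤ Mhu)
    (hLh : (Lh : ℝ) < ‖((A₁.prodCongr A₂).symm : (Es × Eu) →L[K] (Es × Eu))‖⁻¹)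
    (hΛ : max (‖(A₂.symm : Eu →L[K] Eu)‖ * (1 + (Lgu : ℝ)))
        (‖(A₁ : Es →L[K] Es)‖ + (Lgs : ℝ)) < 1) :
    ∃ v : Es × Eu → Es × Eu,
      (Continuous v ∧ (∃ M : ℝ, ∀ x, ‖v x‖ ≤ M) ∧
        ∀ x, (A₁.prodCongr A₂) x + h x + v ((A₁.prodCongr A₂) x + h x)
          = (A₁.prodCongr A₂) (x + v x) + g (x + v x)) ∧
      (∀ x, ‖v x‖ ≤
        max (Mhs + Mgs) (‖(A₂.symm : Eu →L[K] Eu)‖ * (Mhu + Mgu)) /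
          (1 - max (‖(A₂.symm : Eu →L[K] Eu)‖ * (1 + (Lgu : ℝ)))
            (‖(A₁ : Es →L[K] Es)‖ + (Lgs : ℝ)))) ∧
      (g 0 = 0 → h 0 = 0 → v 0 = 0) ∧
      (∀ v' : Es × Eu → Es × Eu,
        (Continuous v' ∧ (∃ M : ℝ, ∀ x, ‖v' x‖ ≤ M) ∧
          ∀ x, (A₁.prodCongr A₂) x + h x + v' ((A₁.prodCongr A₂) x + h x)
            = (A₁.prodCongr A₂) (x + v' x) + g (x + v' x)) → v' = v) := by
  obtain ⟨F, hF⟩ := (A₁.prodCongr A₂).exists_homeomorph_eq_add_of_lipschitzWith hhL hLh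
  have hΦc (v : (Es × Eu) →ᵇ (Es × Eu)) : Continuous (conjugacyOperator A₁ A₂ F g h v) :=
    continuous_conjugacyOperator (hgsL.continuous.prodMk hguL.continuous) hhL.continuous
      v.continuous
  have hΦb (v : (Es × Eu) →ᵇ (Es × Eu)) : ∃ C, ∀ x, ‖conjugacyOperator A₁ A₂ F g h v x‖ ≤ C :=
    ⟨_, norm_conjugacyOperator_le hgsM hguM hhsM hhuM v.norm_coe_le_norm⟩
  have hΛ₀ : 0 ≤ max (‖(A₂.symm : Eu →L[K] Eu)‖ * (1 + (Lgu : ℝ))) (‖(A₁ : Es →L[K] Es)‖ + Lgs) :=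
    le_max_of_le_right (by positivity)
  have hT : ContractingWith ⟨_, hΛ₀⟩ (inducedMap _ hΦc hΦb) :=
    contractingWith_inducedMap hΛ fun v w =>
      dist_conjugacyOperator_le hgsL hguL (dist_coe_le_dist (f := v) (g := w))
  refine ⟨hT.fixedPoint, ⟨hT.fixedPoint.continuous, ⟨_, hT.fixedPoint.norm_coe_le_norm⟩,
    (conjugacyOperator_eq_self_iff hF).1 (apply_fixedPoint_inducedMap hT)⟩,
    norm_fixedPoint_inducedMap_le hT fun x => ?_, fun hg hh => ?_,
    fun v' ⟨hvc, ⟨M, hvM⟩, hv⟩ =>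
      eq_fixedPoint_inducedMap hT hvc hvM ((conjugacyOperator_eq_self_iff hF).2 hv)⟩
  · simpa using norm_conjugacyOperator_le (A₁ := A₁) (A₂ := A₂) (F := F) hgsM hguM hhsM hhuM
      (v := 0) (C := 0) (by simp) x
  · exact fixedPoint_inducedMap_apply_eq_zero hT fun v hv =>
      conjugacyOperator_apply_zero (by simp [hF, hh]) hg hh hv

/-- Conjugacy between two bounded Lipschitz perturbations of a hyperbolic-type
automorphism of `E = E_s × E_u` (with max norm): there is a unique bounded
continuous `v` with `(id + v) ∘ (A + h) = (A + g) ∘ (id + v)`, satisfying the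
stated sup-norm bound, and `v 0 = 0` when `g 0 = h 0 = 0`. -/
theorem conjugacy_between_perturbations
    {K Es Eu : Type*} [NontriviallyNormedField K]
    [NormedAddCommGroup Es] [NormedSpace K Es] [CompleteSpace Es]
    [NormedAddCommGroup Eu] [NormedSpace K Eu] [CompleteSpace Eu]
    (A₁ : Es ≃L[K] Es) (A₂ : Eu ≃L[K] Eu)
    (g h : Es × Eu → Es × Eu)
    (Lg Lh Lgs Lgu : ℝ≥0) (Mgs Mgu Mhs Mhu : ℝ)
    (hgL : LipschitzWith Lg g) (hhL : LipschitzWith Lh h)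
    (hgsL : LipschitzWith Lgs (fun x => (g x).1))
    (hguL : LipschitzWith Lgu (fun x => (g x).2))
    (hgsM : ∀ x, ‖(g x).1‖ ≤ Mgs) (hguM : ∀ x, ‖(g x).2‖ ≤ Mgu)
    (hhsM : ∀ x, ‖(h x).1‖ ≤ Mhs) (hhuM : ∀ x, ‖(h x).2‖ ≤ Mhu)
    (hLh : (Lh : ℝ) < ‖((A₁.prodCongr A₂).symm : (Es × Eu) →L[K] (Es × Eu))‖⁻¹)
    (hΛ : max (‖(A₂.symm : Eu →L[K] Eu)‖ * (1 + (Lgu : ℝ)))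
        (‖(A₁ : Es →L[K] Es)‖ + (Lgs : ℝ)) < 1) :
    ∃ v : Es × Eu → Es × Eu,
      (Continuous v ∧ (∃ M : ℝ, ∀ x, ‖v x‖ ≤ M) ∧
        ∀ x, (A₁.prodCongr A₂) x + h x + v ((A₁.prodCongr A₂) x + h x)
          = (A₁.prodCongr A₂) (x + v x) + g (x + v x)) ∧
      (∀ x, ‖v x‖ ≤
        max (Mhs + Mgs) (‖(A₂.symm : Eu →L[K] Eu)‖ * (Mhu + Mgu)) /
          (1 - max (‖(A₂.symm : Eu →L[K] Eu)‖ * (1 + (Lgu : ℝ)))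
            (‖(A₁ : Es →L[K] Es)‖ + (Lgs : ℝ)))) ∧
      (g 0 = 0 → h 0 = 0 → v 0 = 0) ∧
      (∀ v' : Es × Eu → Es × Eu,
        (Continuous v' ∧ (∃ M : ℝ, ∀ x, ‖v' x‖ ≤ M) ∧
          ∀ x, (A₁.prodCongr A₂) x + h x + v' ((A₁.prodCongr A₂) x + h x)
            = (A₁.prodCongr A₂) (x + v' x) + g (x + v' x)) → v' = v) :=
  conjugacy_between_perturbations_general A₁ A₂ g h Lh Lgs Lgu Mgs Mgu Mhs Mhu hhL hgsL hguL hgsM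
    hguM hhsM hhuM hLh hΛ
end

section
/- Let (K, d) be a compact metric space, E a finite-dimensional normed space over ℝ, and α > β > 0. Then the inclusion map j : L_α(K, E) → L_β(K, E), f ↦ f, is a compact operator: the image of the unit ball {f : max{‖f‖_∞, Lip_α(f)} < 1} is relatively compact in (L_β(K, E), ‖·‖_β). -/
open NNReal

private lemma holder_equicont {K : Type*} [MetricSpace K]
    {E : Type*} [NormedAddCommGroup E] (α : ℝ≥0) (hα : 0 < α)
    (A : Set (BoundedContinuousFunction K E))
    (hA : ∀ F ∈ A, HolderWith 1 α F) :
    Equicontinuous ((↑) : A → K → E) := by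
  intro x
  rw [Metric.equicontinuousAt_iff]
  intro ε hε
  refine ⟨ε ^ (1 / (α : ℝ)), Real.rpow_pos_of_pos hε _, fun y hy F => ?_⟩
  have h1 : dist ((F : K → E) x) ((F : K → E) y) ≤ dist x y ^ (α : ℝ) := by
    simpa using (hA F F.2).dist_le (x := x) (y := y)
  have hα' : (0:ℝ) < (α : ℝ) := by exact_mod_cast hα
  rw [dist_comm] at hy
  have h2 : dist x y ^ (α : ℝ) < (ε ^ (1 / (α : ℝ))) ^ (α : ℝ) :=
    Real.rpow_lt_rpow dist_nonneg hy hα'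
  have h3 : (ε ^ (1 / (α : ℝ))) ^ (α : ℝ) = ε := by
    rw [← Real.rpow_mul hε.le, one_div_mul_cancel hα'.ne', Real.rpow_one]
  calc dist ((F : K → E) x) ((F : K → E) y) ≤ dist x y ^ (α : ℝ) := h1
    _ < ε := h3 ▸ h2

/-- Compactness of the inclusion `L_α(K,E) → L_β(K,E)` for `α > β > 0`, `K`
compact and `E` finite-dimensional: the unit ball of `L_α(K,E)` is totally
bounded for the Hölder norm `‖·‖_β` (equivalently, relatively compact, since
`L_β(K,E)` is complete). -/
theorem holder_inclusion_compact_operator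
    {K : Type*} [MetricSpace K] [CompactSpace K]
    {E : Type*} [NormedAddCommGroup E] [NormedSpace ℝ E] [FiniteDimensional ℝ E]
    (α β : ℝ≥0) (hβ : 0 < β) (hβα : β < α) :
    ∀ ε : ℝ, 0 < ε → ∃ T : Finset (K → E),
      ∀ f : K → E, ((∀ x, ‖f x‖ ≤ 1) ∧ HolderWith 1 α f) →
        ∃ g ∈ T, (∀ x, ‖f x - g x‖ ≤ ε) ∧
          ∀ x y : K, x ≠ y →
            ‖(f x - g x) - (f y - g y)‖ ≤ ε * dist x y ^ (β : ℝ) := by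
  intro ε hε
  have hα : (0:ℝ≥0) < α := hβ.trans hβα
  have hc : (0:ℝ) < (α : ℝ) - (β : ℝ) := by
    have := hβα; exact sub_pos.mpr (by exact_mod_cast this)
  set c : ℝ := (α : ℝ) - (β : ℝ) with hcdef
  set r : ℝ := (ε / 2) ^ (1 / c) with hrdef
  have hr : 0 < r := Real.rpow_pos_of_pos (half_pos hε) _
  have hrc : r ^ c = ε / 2 := by
    rw [hrdef, ← Real.rpow_mul (half_pos hε).le, one_div_mul_cancel hc.ne', Real.rpow_one]
  set δ : ℝ := min ε ((ε / 2) * r ^ (β : ℝ)) with hδdef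
  have hδ : 0 < δ :=
    lt_min hε (mul_pos (half_pos hε) (Real.rpow_pos_of_pos hr _))
  -- the set in bounded continuous functions
  set A : Set (BoundedContinuousFunction K E) :=
    {F | (∀ x, ‖F x‖ ≤ 1) ∧ HolderWith 1 α F} with hAdef
  have hAcompact : IsCompact (closure A) := by
    refine BoundedContinuousFunction.arzela_ascoli (Metric.closedBall (0:E) 1)
      (isCompact_closedBall 0 1) A (fun F x hF => ?_) ?_
    · simpa [Metric.mem_closedBall, dist_eq_norm] using hF.1 x
    · exact holder_equicont α hα A (fun F hF => hF.2)
  have hAtb : TotallyBounded A :=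
    (hAcompact.totallyBounded).subset subset_closure
  obtain ⟨t, hts, htfin, htcover⟩ := totallyBounded_iff_subset.mp hAtb
    {p : BoundedContinuousFunction K E × BoundedContinuousFunction K E | dist p.1 p.2 < δ}
    (Metric.dist_mem_uniformity hδ)
  classical
  refine ⟨htfin.toFinset.image (fun F => ((F : K → E) : K → E)), fun f hf => ?_⟩
  obtain ⟨hfb, hfα⟩ := hf
  -- package f as a bounded continuous function
  set F : BoundedContinuousFunction K E :=
    BoundedContinuousFunction.ofNormedAddCommGroup f (hfα.continuous hα) 1 hfb with hFdef
  have hFA : F ∈ A := ⟨hfb, hfα⟩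
  obtain ⟨G, hGt, hFG⟩ := Set.mem_iUnion₂.mp (htcover hFA)
  have hFGdist : dist F G < δ := hFG
  have hGA : G ∈ A := hts hGt
  refine ⟨(G : K → E), by
    simpa using Finset.mem_image_of_mem (fun (F : BoundedContinuousFunction K E) => (F : K → E))
      (htfin.mem_toFinset.mpr hGt), ?_, ?_⟩
  · intro x
    have h0 : dist (F x) (G x) ≤ dist F G :=
      BoundedContinuousFunction.dist_coe_le_dist (f := F) (g := G) x
    have h1 : ‖f x - G x‖ ≤ δ := by
      rw [← dist_eq_norm]
      exact le_trans h0 hFGdist.le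
    exact h1.trans (min_le_left _ _)
  · intro x y hxy
    have hd : 0 < dist x y := dist_pos.mpr hxy
    have hsup : ∀ z, ‖f z - G z‖ ≤ δ := by
      intro z
      rw [← dist_eq_norm]
      exact le_trans (BoundedContinuousFunction.dist_coe_le_dist (f := F) (g := G) z) hFGdist.le
    have hfxy : ‖f x - f y‖ ≤ dist x y ^ (α : ℝ) := by
      rw [← dist_eq_norm]; simpa using hfα.dist_le (x := x) (y := y)
    have hgxy : ‖G x - G y‖ ≤ dist x y ^ (α : ℝ) := by
      rw [← dist_eq_norm]; simpa using hGA.2.dist_le (x := x) (y := y)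
    have key : ‖(f x - G x) - (f y - G y)‖ ≤ min (2 * δ) (2 * dist x y ^ (α : ℝ)) := by
      refine le_min ?_ ?_
      · calc ‖(f x - G x) - (f y - G y)‖ ≤ ‖f x - G x‖ + ‖f y - G y‖ := norm_sub_le _ _
          _ ≤ δ + δ := add_le_add (hsup x) (hsup y)
          _ = 2 * δ := by ring
      · have : (f x - G x) - (f y - G y) = (f x - f y) - (G x - G y) := by abel
        rw [this]
        calc ‖(f x - f y) - (G x - G y)‖ ≤ ‖f x - f y‖ + ‖G x - G y‖ := norm_sub_le _ _
          _ ≤ dist x y ^ (α : ℝ) + dist x y ^ (α : ℝ) := add_le_add hfxy hgxy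
          _ = 2 * dist x y ^ (α : ℝ) := by ring
    rcases le_or_gt (dist x y) r with hle | hlt
    · refine le_trans (key.trans (min_le_right _ _)) ?_
      have hsplit : dist x y ^ (α : ℝ) = dist x y ^ c * dist x y ^ (β : ℝ) := by
        rw [← Real.rpow_add hd, hcdef]; ring_nf
      rw [hsplit]
      have h1 : dist x y ^ c ≤ r ^ c := Real.rpow_le_rpow dist_nonneg hle hc.le
      calc 2 * (dist x y ^ c * dist x y ^ (β : ℝ))
          ≤ 2 * (r ^ c * dist x y ^ (β : ℝ)) := by
            apply mul_le_mul_of_nonneg_left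
            · exact mul_le_mul_of_nonneg_right h1 (Real.rpow_nonneg dist_nonneg _)
            · norm_num
        _ = ε * dist x y ^ (β : ℝ) := by rw [hrc]; ring
    · refine le_trans (key.trans (min_le_left _ _)) ?_
      have h1 : δ ≤ (ε / 2) * r ^ (β : ℝ) := min_le_right _ _
      have h2 : r ^ (β : ℝ) ≤ dist x y ^ (β : ℝ) :=
        Real.rpow_le_rpow hr.le hlt.le (by positivity)
      calc 2 * δ ≤ 2 * ((ε / 2) * r ^ (β : ℝ)) := by linarith
        _ = ε * r ^ (β : ℝ) := by ring
        _ ≤ ε * dist x y ^ (β : ℝ) := mul_le_mul_of_nonneg_left h2 hε.le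
end
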